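/- Let ψ, ψ̄ : ℝ → ℝ be C², positive, 1-periodic functions, and suppose for all x: (1/2)ψ''(x) − λψ'(x) + (λ²/2 + m g(x))ψ(x) = γ₁ ψ(x) and (1/2)ψ̄''(x) + λψ̄'(x) + (λ²/2 + m g(x))ψ̄(x) = γ₂ ψ̄(x), where g is continuous and 1-periodic. Then γ₁ = γ₂. -/

import Mathlib

theorem stmt5 (ψ ψb g : ℝ → ℝ) (lam m γ1 γ2 : ℝ)
    (hψ : ContDiff ℝ 2 ψ) (hψb : ContDiff ℝ 2 ψb)
    (hψpos : ∀ x, 0 < ψ x) (hψbpos : ∀ x, 0 < ψb x)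
    (hψper : ∀ x, ψ (x + 1) = ψ x) (hψbper : ∀ x, ψb (x + 1) = ψb x)
    (hg : Continuous g) (hgper : ∀ x, g (x + 1) = g x)
    (heq1 : ∀ x, (1 / 2) * deriv (deriv ψ) x - lam * deriv ψ x
      + (lam ^ 2 / 2 + m * g x) * ψ x = γ1 * ψ x)
    (heq2 : ∀ x, (1 / 2) * deriv (deriv ψb) x + lam * deriv ψb x
      + (lam ^ 2 / 2 + m * g x) * ψb x = γ2 * ψb x) :
    γ1 = γ2 := by
  have hψd : Differentiable ℝ ψ := hψ.differentiable (by norm_num)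
  have hψbd : Differentiable ℝ ψb := hψb.differentiable (by norm_num)
  have hψ'c : ContDiff ℝ 1 (deriv ψ) := (contDiff_succ_iff_deriv.mp (by exact_mod_cast hψ : ContDiff ℝ (1+1) ψ)).2.2
  have hψb'c : ContDiff ℝ 1 (deriv ψb) := (contDiff_succ_iff_deriv.mp (by exact_mod_cast hψb : ContDiff ℝ (1+1) ψb)).2.2
  have hψ'd : Differentiable ℝ (deriv ψ) := hψ'c.differentiable (by norm_num)
  have hψb'd : Differentiable ℝ (deriv ψb) := hψb'c.differentiable (by norm_num)
  set F : ℝ → ℝ := fun x =>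
    (1 / 2) * (deriv ψ x * ψb x - deriv ψb x * ψ x) - lam * (ψ x * ψb x) with hF
  have hFderiv : ∀ x, HasDerivAt F ((γ1 - γ2) * (ψ x * ψb x)) x := by
    intro x
    have h1 := (hψ'd x).hasDerivAt
    have h2 := (hψbd x).hasDerivAt
    have h3 := (hψb'd x).hasDerivAt
    have h4 := (hψd x).hasDerivAt
    have hD : HasDerivAt F
        ((1 / 2) * ((deriv (deriv ψ) x * ψb x + deriv ψ x * deriv ψb x)
          - (deriv (deriv ψb) x * ψ x + deriv ψb x * deriv ψ x))
          - lam * (deriv ψ x * ψb x + ψ x * deriv ψb x)) x := by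
      exact (((h1.mul h2).sub (h3.mul h4)).const_mul (1 / 2)).sub
        ((h4.mul h2).const_mul lam)
    convert hD using 1
    have e1 := heq1 x
    have e2 := heq2 x
    linear_combination ψ x * e2 - ψb x * e1
  have hcont : Continuous fun x => (γ1 - γ2) * (ψ x * ψb x) :=
    continuous_const.mul (hψd.continuous.mul hψbd.continuous)
  have hint : ∫ x in (0:ℝ)..1, (γ1 - γ2) * (ψ x * ψb x) = F 1 - F 0 := by
    exact intervalIntegral.integral_eq_sub_of_hasDerivAt
      (fun x _ => hFderiv x) (hcont.intervalIntegrable 0 1)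
  have key : ∀ (f : ℝ → ℝ), Differentiable ℝ f → (∀ x, f (x + 1) = f x) →
      deriv f 1 = deriv f 0 := by
    intro f hf hp
    have h : HasDerivAt (fun y => f (y + 1)) (deriv f 1 * 1) 0 := by
      have h1 : HasDerivAt f (deriv f 1) (id (0:ℝ) + 1) := by
        simpa using (hf 1).hasDerivAt
      exact h1.comp 0 ((hasDerivAt_id (0:ℝ)).add_const 1)
    have heq : (fun y => f (y + 1)) = f := funext hp
    rw [heq] at h
    have := h.deriv
    simpa using this.symm
  have hψ'per := key ψ hψd hψper
  have hψb'per := key ψb hψbd hψbper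
  have hF10 : F 1 = F 0 := by
    simp only [hF]
    rw [hψ'per, hψb'per, show (1:ℝ) = 0 + 1 by ring, hψper, hψbper]
  have hzero : (γ1 - γ2) * ∫ x in (0:ℝ)..1, ψ x * ψb x = 0 := by
    rw [← intervalIntegral.integral_const_mul, hint, hF10, sub_self]
  have hpos : 0 < ∫ x in (0:ℝ)..1, ψ x * ψb x := by
    apply intervalIntegral.intervalIntegral_pos_of_pos
      ((hψd.continuous.mul hψbd.continuous).intervalIntegrable 0 1)
      (fun x => mul_pos (hψpos x) (hψbpos x)) one_pos
  have := mul_eq_zero.mp hzero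
  rcases this with h | h
  · linarith
  · exact absurd h (ne_of_gt hpos)
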